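/- arXiv:2511.16608 — 6 statements merged into one kernel-verified Lean document; each statement's English description precedes it below -/
import Mathlib

section
/- Let X and Y be finite ranked posets with rank functions ρ_X and ρ_Y, and let σ : X → Y be an order-preserving, rank-increasing, strongly surjective function. Then every maximal chain y_0 < y_1 < ⋯ < y_s in Y is the image under σ of some maximal chain x_0 < x_1 < ⋯ < x_r in X (i.e. σ({x_0,…,x_r}) = {y_0,…,y_s}) such that r − s = ρ_Y(y_0) − ρ_X(x_0). -/
/-!
A maximal chain `c 0 ⋖ ⋯ ⋖ c s` of `Y` runs from a minimal to a maximal element. Strong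
surjectivity lifts it step by step to `e 0 ≤ ⋯ ≤ e s` with `ρX (e i) = ρY (c i)`; as the ranks
rise by one and a rank function is strictly monotone, every step is a cover. Prepend a saturated
chain from a minimal element of `X` up to `e 0`: its elements lie below `e 0`, so they map to the
minimal `c 0`, and the top `e s` is maximal, since anything above it maps to `c s` and would have
rank larger than `ρY (c s)`. A saturated chain from a minimal to a maximal element is maximal, and
it is longer than `c` by the length of the prepended part, which is `ρY (c 0) = ρX (e 0)` minus the
rank of the new bottom element.
-/

namespace SFSPaper

variable {α β : Type*}

/-- `ρ` is a rank function: it increases by exactly one along covering relations. -/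
def IsRankFunction [Preorder α] (ρ : α → ℤ) : Prop :=
  ∀ ⦃z z' : α⦄, z ⋖ z' → ρ z' = ρ z + 1

/-- `σ` is rank-increasing with respect to the rank functions `ρX` and `ρY`. -/
def RankIncreasing [Preorder α] [Preorder β] (ρX : α → ℤ) (ρY : β → ℤ) (σ : α → β) : Prop :=
  ∀ x : α, ρX x ≤ ρY (σ x)

/-- `σ` is strongly surjective. -/
def StronglySurjective [Preorder α] [Preorder β] (ρX : α → ℤ) (ρY : β → ℤ) (σ : α → β) : Prop :=
  Function.Surjective σ ∧
    ∀ (x : α) (y : β), σ x ≤ y → ∃ x' : α, x ≤ x' ∧ ρX x' = ρY y ∧ σ x' = y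

/-- The alternating sum `∑_{z ≤ w ≤ z'} (-1)^(ρ w)`. -/
noncomputable def intervalEulerSum [Preorder α] (ρ : α → ℤ) (z z' : α) : ℚ :=
  ∑ᶠ (w : α) (_ : z ≤ w ∧ w ≤ z'), (-1 : ℚ) ^ ρ w

/-- A poset is lower Eulerian with respect to `ρ` if `ρ` is a rank function, there is a
unique minimal (i.e. least) element, and every nontrivial interval has as many elements of even
rank as of odd rank. -/
def LowerEulerian [PartialOrder α] (ρ : α → ℤ) : Prop :=
  IsRankFunction ρ ∧ (∃ b : α, ∀ z : α, b ≤ z) ∧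
    ∀ z z' : α, z < z' → intervalEulerSum ρ z z' = 0

/-- Eulerian: lower Eulerian with a unique maximal element. -/
def Eulerian [PartialOrder α] (ρ : α → ℤ) : Prop :=
  LowerEulerian ρ ∧ ∃ t : α, ∀ z : α, z ≤ t

/-- Strong formal subdivision. -/
def StrongFormalSubdivision [PartialOrder α] [PartialOrder β]
    (ρX : α → ℤ) (ρY : β → ℤ) (σ : α → β) : Prop :=
  Monotone σ ∧ RankIncreasing ρX ρY σ ∧ StronglySurjective ρX ρY σ ∧
    ∀ (x : α) (y : β), σ x ≤ y →
      (∑ᶠ (x' : α) (_ : x ≤ x' ∧ σ x' = y), (-1 : ℚ) ^ (ρY y - ρX x')) = 1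

/-- `q` is join-admissible: every `z` has a join with `q`. -/
def JoinAdmissible [Preorder α] (q : α) : Prop :=
  ∀ z : α, ∃ j : α, IsLeast {w : α | z ≤ w ∧ q ≤ w} j

/-- The rank of a poset: the maximal length of a chain `z_0 < z_1 < ⋯ < z_s`. -/
noncomputable def posetRank (α : Type*) [Preorder α] : ℕ :=
  sSup {n : ℕ | ∃ c : Fin (n + 1) → α, StrictMono c}

/-- A poset is graded if all of its maximal chains have the same length (cardinality). -/
def GradedPoset (α : Type*) [Preorder α] : Prop :=
  ∀ s t : Set α, IsMaxChain (· ≤ ·) s → IsMaxChain (· ≤ ·) t → s.ncard = t.ncard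


end SFSPaper

open Set

section CovBySeries

variable {α : Type*}

theorem RelSeries.mem_smash {r : SetRel α α} {p q : RelSeries r} (h : p.last = q.head) {x : α} :
    x ∈ p.smash q h ↔ x ∈ p ∨ x ∈ q := by
  constructor
  · rintro ⟨i, rfl⟩
    revert i
    refine Fin.addCases (m := p.length) (n := q.length + 1) (fun i ↦ ?_) (fun i ↦ ?_) <;>
      dsimp only [RelSeries.smash]
    · exact Or.inl ⟨i.castSucc, by rw [Fin.addCases_left]; rfl⟩
    · exact Or.inr ⟨i, by rw [Fin.addCases_right]⟩
  · rintro (⟨i, rfl⟩ | ⟨i, rfl⟩)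
    · exact ⟨i.castLE (by simp), RelSeries.smash_castLE h i⟩
    · exact ⟨i.natAdd p.length, by dsimp only [RelSeries.smash]; exact Fin.addCases_right i⟩

variable [PartialOrder α]

theorem RelSeries.strictMono_of_covBy (p : RelSeries {(a, b) : α × α | a ⋖ b}) : StrictMono p :=
  Fin.strictMono_iff_lt_succ.2 fun i ↦ (p.step i).lt

theorem exists_relSeries_covBy_of_le [WellFoundedLT α] [WellFoundedGT α] {x y : α} (h : x ≤ y) :
    ∃ p : RelSeries {(a, b) : α × α | a ⋖ b}, p.head = x ∧ p.last = y := by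
  obtain ⟨a, ha0, n, han, ha⟩ := exists_covBy_seq_of_wellFoundedLT_wellFoundedGT_of_le h
  exact ⟨⟨n, (a ·), fun i ↦ ha i i.isLt⟩, ha0, han⟩

theorem exists_relSeries_covBy_isMin_head [WellFoundedLT α] [WellFoundedGT α] (x : α) :
    ∃ p : RelSeries {(a, b) : α × α | a ⋖ b}, IsMin p.head ∧ p.last = x := by
  obtain ⟨m, hmx, hm⟩ := exists_minimal_le_of_wellFoundedLT (fun _ ↦ True) x trivial
  obtain ⟨p, rfl, hp⟩ := exists_relSeries_covBy_of_le hmx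
  exact ⟨p, minimal_true.1 hm, hp⟩

theorem RelSeries.image_range_smash_of_isMin {β : Type*} [PartialOrder β] {σ : α → β}
    (hσ : Monotone σ) {p q : RelSeries {(a, b) : α × α | a ⋖ b}} (h : p.last = q.head)
    (hmin : IsMin (σ q.head)) : σ '' range (p.smash q h) = σ '' range q := by
  refine (image_mono fun x hx ↦ (mem_smash h).2 (Or.inr hx)).antisymm' ?_
  rintro _ ⟨x, hx, rfl⟩
  rcases (mem_smash h).1 hx with ⟨i, rfl⟩ | hx
  · have hle : σ (p i) ≤ σ q.head := h ▸ hσ (p.strictMono_of_covBy.monotone i.le_last)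
    exact ⟨q.head, q.head_mem, (hmin hle).antisymm hle⟩
  · exact mem_image_of_mem σ hx

end CovBySeries

section MaxChain

variable {α : Type*} [PartialOrder α] {s : Set α} {a : α} {n : ℕ} {c : Fin (n + 1) → α}

theorem IsMaxChain.mem_of_forall_le_or_ge (hs : IsMaxChain (· ≤ ·) s)
    (ha : ∀ b ∈ s, a ≤ b ∨ b ≤ a) : a ∈ s :=
  (hs.2 (hs.1.insert fun b hb _ ↦ ha b hb) (subset_insert a s)).symm ▸ mem_insert a s

theorem IsMaxChain.isMin_apply_zero (hc : Monotone c) (h : IsMaxChain (· ≤ ·) (range c)) :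
    IsMin (c 0) := by
  intro a ha
  obtain ⟨i, rfl⟩ := h.mem_of_forall_le_or_ge (a := a) <| by
    rintro _ ⟨j, rfl⟩
    exact Or.inl (ha.trans (hc (Fin.zero_le j)))
  exact hc (Fin.zero_le i)

theorem IsMaxChain.isMax_apply_last (hc : Monotone c) (h : IsMaxChain (· ≤ ·) (range c)) :
    IsMax (c (.last n)) := by
  intro a ha
  obtain ⟨i, rfl⟩ := h.mem_of_forall_le_or_ge (a := a) <| by
    rintro _ ⟨j, rfl⟩
    exact Or.inr ((hc (Fin.le_last j)).trans ha)
  exact hc (Fin.le_last i)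

theorem IsMaxChain.covBy_apply_succ (hc : StrictMono c) (h : IsMaxChain (· ≤ ·) (range c))
    (i : Fin n) : c i.castSucc ⋖ c i.succ := by
  refine ⟨hc i.castSucc_lt_succ, fun a h₁ h₂ ↦ ?_⟩
  obtain ⟨j, rfl⟩ := h.mem_of_forall_le_or_ge (a := a) <| by
    rintro _ ⟨j, rfl⟩
    rcases le_or_gt j i.castSucc with hj | hj
    · exact Or.inr ((hc.monotone hj).trans h₁.le)
    · exact Or.inl (h₂.le.trans (hc.monotone (Fin.castSucc_lt_iff_succ_le.1 hj)))
  exact (Fin.castSucc_lt_iff_succ_le.1 (hc.lt_iff_lt.1 h₁)).not_gt (hc.lt_iff_lt.1 h₂)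

theorem IsMaxChain.range_fin_of_isMin_of_isMax (h0 : IsMin (c 0)) (hlast : IsMax (c (.last n)))
    (hcov : ∀ i : Fin n, c i.castSucc ⋖ c i.succ) : IsMaxChain (· ≤ ·) (range c) := by
  have hmono : Monotone c := Fin.monotone_iff_le_succ.2 fun i ↦ (hcov i).le
  refine ⟨hmono.isChain_range, fun t ht hct ↦ hct.antisymm fun x hx ↦ ?_⟩
  rw [mem_range]
  by_contra! hxc
  have hcomp (i : Fin (n + 1)) : c i ≤ x ∨ x ≤ c i := ht.total (hct (mem_range_self i)) hx
  suffices ∀ i, c i < x from hlast.not_lt (this _)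
  intro i
  induction i using Fin.induction with
  | zero => exact ((hcomp 0).elim id fun h ↦ h0 h).lt_of_ne (hxc 0)
  | succ i ih =>
    refine ((hcomp i.succ).resolve_right fun h ↦ (hcov i).2 ih ?_).lt_of_ne (hxc i.succ)
    exact h.lt_of_ne (hxc i.succ).symm

end MaxChain

namespace SFSPaper

section RankFunction

variable {α : Type*} [PartialOrder α] {ρ : α → ℤ}

theorem IsRankFunction.apply_last (hρ : IsRankFunction ρ)
    (p : RelSeries {(a, b) : α × α | a ⋖ b}) : ρ p.last = ρ p.head + p.length := by
  suffices ∀ i : Fin (p.length + 1), ρ (p i) = ρ p.head + i from this (.last _)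
  intro i
  induction i using Fin.induction with
  | zero => simp [RelSeries.head]
  | succ i ih =>
    rw [Fin.val_succ, hρ (p.step i), ih, Fin.val_castSucc]
    push_cast
    ring

variable [WellFoundedLT α] [WellFoundedGT α]

theorem IsRankFunction.strictMono (hρ : IsRankFunction ρ) : StrictMono ρ := by
  intro x y hxy
  obtain ⟨p, rfl, rfl⟩ := exists_relSeries_covBy_of_le hxy.le
  have hlen : p.length ≠ 0 := fun h0 ↦
    hxy.ne (RelSeries.subsingleton_of_length_eq_zero h0 p.head_mem p.last_mem)
  rw [hρ.apply_last]
  omega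

theorem IsRankFunction.covBy_of_le_of_apply_eq_add_one (hρ : IsRankFunction ρ) {a b : α}
    (hab : a ≤ b) (h : ρ b = ρ a + 1) : a ⋖ b := by
  refine ⟨hab.lt_of_ne ?_, fun z haz hzb ↦ ?_⟩
  · rintro rfl
    omega
  · have := hρ.strictMono haz
    have := hρ.strictMono hzb
    omega

end RankFunction

variable {X Y : Type*} [PartialOrder X] [PartialOrder Y] {ρX : X → ℤ} {ρY : Y → ℤ} {σ : X → Y}

theorem RankIncreasing.isMax_of_isMax_apply [WellFoundedLT X] [WellFoundedGT X]
    (hrank : RankIncreasing ρX ρY σ) (hρX : IsRankFunction ρX) (hmono : Monotone σ) {x : X}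
    (hx : IsMax (σ x)) (hρx : ρY (σ x) ≤ ρX x) : IsMax x := by
  intro z hxz
  by_contra hzx
  have hσ : σ z = σ x := hx (hmono hxz) |>.antisymm (hmono hxz)
  have := hρX.strictMono (lt_of_le_not_ge hxz hzx)
  have := hrank z
  rw [hσ] at this
  omega

theorem StronglySurjective.exists_monotone_lift (hss : StronglySurjective ρX ρY σ) {n : ℕ}
    (c : Fin (n + 1) → Y) (hc : Monotone c) (x : X) (hx : σ x ≤ c 0) :
    ∃ e : Fin (n + 1) → X, Monotone e ∧ x ≤ e 0 ∧ (∀ i, σ (e i) = c i) ∧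
      ∀ i, ρX (e i) = ρY (c i) := by
  obtain ⟨x₀, hxx₀, hρx₀, hσx₀⟩ := hss.2 x (c 0) hx
  induction n generalizing x x₀ with
  | zero =>
    refine ⟨fun _ ↦ x₀, monotone_const, hxx₀, fun i ↦ ?_, fun i ↦ ?_⟩ <;>
      rw [Fin.fin_one_eq_zero i] <;> assumption
  | succ n ih =>
    have hx₀ : σ x₀ ≤ Fin.tail c 0 := hσx₀ ▸ hc (Fin.zero_le _)
    obtain ⟨x₁, hx₀x₁, hρx₁, hσx₁⟩ := hss.2 x₀ (Fin.tail c 0) hx₀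
    obtain ⟨e, he, hx₀e, hσe, hρe⟩ :=
      ih (Fin.tail c) (hc.comp Fin.strictMono_succ.monotone) x₀ hx₀ x₁ hx₀x₁ hρx₁ hσx₁
    refine ⟨Fin.cons x₀ e, Fin.monotone_iff_le_succ.2 fun i ↦ ?_, hxx₀,
      Fin.cases hσx₀ hσe, Fin.cases hρx₀ hρe⟩
    induction i using Fin.cases with
    | zero => simpa using hx₀e
    | succ i => simpa using he i.castSucc_le_succ

theorem StronglySurjective.exists_covBy_lift [WellFoundedLT X] [WellFoundedGT X]
    (hss : StronglySurjective ρX ρY σ) (hρX : IsRankFunction ρX) (hρY : IsRankFunction ρY)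
    {n : ℕ} (c : Fin (n + 1) → Y) (hc : ∀ i : Fin n, c i.castSucc ⋖ c i.succ) :
    ∃ e : Fin (n + 1) → X, (∀ i : Fin n, e i.castSucc ⋖ e i.succ) ∧ (∀ i, σ (e i) = c i) ∧
      ∀ i, ρX (e i) = ρY (c i) := by
  obtain ⟨x, hx⟩ := hss.1 (c 0)
  obtain ⟨e, he, -, hσe, hρe⟩ :=
    hss.exists_monotone_lift c (Fin.monotone_iff_le_succ.2 fun i ↦ (hc i).le) x hx.le
  refine ⟨e, fun i ↦ hρX.covBy_of_le_of_apply_eq_add_one (he i.castSucc_le_succ) ?_, hσe, hρe⟩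
  rw [hρe, hρe, hρY (hc i)]

theorem liftMaximalChains_general {X Y : Type*} [PartialOrder X] [PartialOrder Y] [Finite X]
    (ρX : X → ℤ) (ρY : Y → ℤ) (hρX : IsRankFunction ρX) (hρY : IsRankFunction ρY)
    (σ : X → Y) (hmono : Monotone σ) (hrank : RankIncreasing ρX ρY σ)
    (hss : StronglySurjective ρX ρY σ)
    (s : ℕ) (c : Fin (s + 1) → Y) (hc : StrictMono c)
    (hmax : IsMaxChain (· ≤ ·) (Set.range c)) :
    ∃ (r : ℕ) (d : Fin (r + 1) → X), StrictMono d ∧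
      IsMaxChain (· ≤ ·) (Set.range d) ∧
      σ '' Set.range d = Set.range c ∧
      (r : ℤ) - (s : ℤ) = ρY (c 0) - ρX (d 0) := by
  obtain ⟨e, he, hσe, hρe⟩ := hss.exists_covBy_lift hρX hρY c (hmax.covBy_apply_succ hc)
  let q : RelSeries {(a, b) : X × X | a ⋖ b} := ⟨s, e, he⟩
  obtain ⟨p, hp, hpq⟩ := exists_relSeries_covBy_isMin_head q.head
  let d := p.smash q hpq
  have hd0 : d 0 = p.head := RelSeries.head_smash hpq
  refine ⟨d.length, d, d.strictMono_of_covBy,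
    IsMaxChain.range_fin_of_isMin_of_isMax (hd0 ▸ hp) ?_ d.step, ?_, ?_⟩
  · rw [show d (.last _) = e (.last s) from RelSeries.last_smash hpq]
    refine hrank.isMax_of_isMax_apply hρX hmono ?_ (by rw [hσe, hρe])
    exact hσe _ ▸ hmax.isMax_apply_last hc.monotone
  · rw [RelSeries.image_range_smash_of_isMin hmono hpq (hσe 0 ▸ hmax.isMin_apply_zero hc.monotone),
      ← range_comp]
    exact congrArg range (funext hσe)
  · have hrankp := hρX.apply_last p
    rw [hpq, show q.head = e 0 from rfl, hρe] at hrankp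
    rw [hd0, show d.length = p.length + s from RelSeries.smash_length p q hpq]
    push_cast
    omega

/-- Lemma: lifting maximal chains.
Every maximal chain `y_0 < ⋯ < y_s` in `Y` is the image under a strongly surjective,
order-preserving, rank-increasing map `σ` of a maximal chain `x_0 < ⋯ < x_r` in `X`
with `r - s = ρ_Y(y_0) - ρ_X(x_0)`. -/
theorem liftMaximalChains {X Y : Type*} [PartialOrder X] [PartialOrder Y] [Finite X] [Finite Y]
    (ρX : X → ℤ) (ρY : Y → ℤ) (hρX : IsRankFunction ρX) (hρY : IsRankFunction ρY)
    (σ : X → Y) (hmono : Monotone σ) (hrank : RankIncreasing ρX ρY σ)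
    (hss : StronglySurjective ρX ρY σ)
    (s : ℕ) (c : Fin (s + 1) → Y) (hc : StrictMono c)
    (hmax : IsMaxChain (· ≤ ·) (Set.range c)) :
    ∃ (r : ℕ) (d : Fin (r + 1) → X), StrictMono d ∧
      IsMaxChain (· ≤ ·) (Set.range d) ∧
      σ '' Set.range d = Set.range c ∧
      (r : ℤ) - (s : ℤ) = ρY (c 0) - ρX (d 0) :=
  liftMaximalChains_general ρX ρY hρX hρY σ hmono hrank hss s c hc hmax

end SFSPaper
end

section
/- Let X, Y, Z be finite lower Eulerian posets with rank functions ρ_X, ρ_Y, ρ_Z respectively. Let σ : X → Y be a strong formal subdivision and let τ : Y → Z be an order-preserving, rank-increasing function. Then τ is a strong formal subdivision if and only if τ ∘ σ is a strong formal subdivision. -/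
namespace SFSPaper

variable {α β : Type*}

/-! Grouping the `x' ≥ x` of `X` by their image `y = σ x'`, the unit fiber sums of `σ` turn
every alternating sum over `{x' ≥ x | τ (σ x') = z}` into the corresponding sum over
`{y ≥ σ x | τ y = z}`; since `σ` is surjective, the fiber-sum axiom holds for `τ` exactly when it
holds for `τ ∘ σ`. The remaining axioms pass through composition, and strong surjectivity of `τ`
is recovered from that of `τ ∘ σ` because ranks get squeezed:
`ρX x' ≤ ρY (σ x') ≤ ρZ (τ (σ x')) = ρX x'`. -/

def UnitFiberSums [Preorder α] [Preorder β] (ρX : α → ℤ) (ρY : β → ℤ) (σ : α → β) : Prop :=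
  ∀ (x : α) (y : β), σ x ≤ y →
    (∑ᶠ (x' : α) (_ : x ≤ x' ∧ σ x' = y), (-1 : ℚ) ^ (ρY y - ρX x')) = 1

section Composition

variable {X Y Z : Type*} {ρX : X → ℤ} {ρY : Y → ℤ} {ρZ : Z → ℤ} {σ : X → Y} {τ : Y → Z}

lemma finsum_cond_eq_sum_filter {M : Type*} [AddCommMonoid M] [Fintype X] (p : X → Prop)
    [DecidablePred p] (f : X → M) :
    (∑ᶠ (x : X) (_ : p x), f x) = ∑ x ∈ Finset.univ.filter p, f x :=
  finsum_cond_eq_sum_of_cond_iff f fun _ => by simp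

lemma RankIncreasing.comp [Preorder X] [Preorder Y] [Preorder Z]
    (hτ : RankIncreasing ρY ρZ τ) (hσ : RankIncreasing ρX ρY σ) :
    RankIncreasing ρX ρZ (τ ∘ σ) :=
  fun x => (hσ x).trans (hτ (σ x))

lemma StronglySurjective.comp [Preorder X] [Preorder Y] [Preorder Z]
    (hτ : StronglySurjective ρY ρZ τ) (hσ : StronglySurjective ρX ρY σ) :
    StronglySurjective ρX ρZ (τ ∘ σ) := by
  refine ⟨hτ.1.comp hσ.1, fun x z hxz => ?_⟩
  obtain ⟨y, hxy, hyz, rfl⟩ := hτ.2 (σ x) z hxz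
  obtain ⟨x', hxx', hx'y, rfl⟩ := hσ.2 x y hxy
  exact ⟨x', hxx', hx'y.trans hyz, rfl⟩

lemma StronglySurjective.of_comp [Preorder X] [Preorder Y] [Preorder Z]
    (h : StronglySurjective ρX ρZ (τ ∘ σ)) (hσmono : Monotone σ)
    (hσsurj : Function.Surjective σ) (hσrank : RankIncreasing ρX ρY σ)
    (hτrank : RankIncreasing ρY ρZ τ) :
    StronglySurjective ρY ρZ τ := by
  refine ⟨h.1.of_comp, fun y z hyz => ?_⟩
  obtain ⟨x, rfl⟩ := hσsurj y
  obtain ⟨x', hxx', hx'z, rfl⟩ := h.2 x z hyz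
  exact ⟨σ x', hσmono hxx', le_antisymm (hτrank (σ x')) (hx'z ▸ hσrank x'), rfl⟩

lemma UnitFiberSums.finsum_pullback [Preorder X] [Preorder Y] [Finite X] [Finite Y]
    (hσ : UnitFiberSums ρX ρY σ) (hσmono : Monotone σ) (p : Y → Prop) (n : ℤ) (x : X) :
    (∑ᶠ (x' : X) (_ : x ≤ x' ∧ p (σ x')), (-1 : ℚ) ^ (n - ρX x')) =
      ∑ᶠ (y : Y) (_ : σ x ≤ y ∧ p y), (-1 : ℚ) ^ (n - ρY y) := by
  classical
  have := Fintype.ofFinite X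
  have := Fintype.ofFinite Y
  simp only [finsum_cond_eq_sum_filter]
  have hmaps : ∀ x' ∈ Finset.univ.filter (fun x' => x ≤ x' ∧ p (σ x')),
      σ x' ∈ Finset.univ.filter (fun y => σ x ≤ y ∧ p y) := by
    simp only [Finset.mem_filter, Finset.mem_univ, true_and]
    exact fun x' hx' => ⟨hσmono hx'.1, hx'.2⟩
  rw [← Finset.sum_fiberwise_of_maps_to hmaps]
  refine Finset.sum_congr rfl fun y hy => ?_
  simp only [Finset.mem_filter, Finset.mem_univ, true_and] at hy
  have hfiber : {x' ∈ Finset.univ.filter (fun x' => x ≤ x' ∧ p (σ x')) | σ x' = y}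
      = Finset.univ.filter (fun x' => x ≤ x' ∧ σ x' = y) := by
    ext x'
    simp only [Finset.mem_filter, Finset.mem_univ, true_and]
    constructor
    · rintro ⟨⟨hxx', -⟩, rfl⟩
      exact ⟨hxx', rfl⟩
    · rintro ⟨hxx', rfl⟩
      exact ⟨⟨hxx', hy.2⟩, rfl⟩
  rw [hfiber]
  have hunit := hσ x y hy.1
  rw [finsum_cond_eq_sum_filter] at hunit
  calc ∑ x' ∈ Finset.univ.filter (fun x' => x ≤ x' ∧ σ x' = y), (-1 : ℚ) ^ (n - ρX x')
      = ∑ x' ∈ Finset.univ.filter (fun x' => x ≤ x' ∧ σ x' = y),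
          (-1 : ℚ) ^ (n - ρY y) * (-1 : ℚ) ^ (ρY y - ρX x') := by
        refine Finset.sum_congr rfl fun x' _ => ?_
        rw [← zpow_add₀ (by norm_num)]
        ring_nf
    _ = (-1 : ℚ) ^ (n - ρY y) := by rw [← Finset.mul_sum, hunit, mul_one]

lemma unitFiberSums_comp_iff [Preorder X] [Preorder Y] [Preorder Z] [Finite X] [Finite Y]
    (hσ : UnitFiberSums ρX ρY σ) (hσmono : Monotone σ) (hσsurj : Function.Surjective σ) :
    UnitFiberSums ρY ρZ τ ↔ UnitFiberSums ρX ρZ (τ ∘ σ) := by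
  have hpull (x : X) (z : Z) := hσ.finsum_pullback hσmono (fun y => τ y = z) (ρZ z) x
  constructor
  · intro hτ x z hxz
    exact (hpull x z).trans (hτ (σ x) z hxz)
  · intro h y z hyz
    obtain ⟨x, rfl⟩ := hσsurj y
    exact (hpull x z).symm.trans (h x z hyz)

end Composition

theorem strongFormalSubdivision_comp_iff_general {X Y Z : Type*}
    [PartialOrder X] [PartialOrder Y] [PartialOrder Z] [Finite X] [Finite Y]
    (ρX : X → ℤ) (ρY : Y → ℤ) (ρZ : Z → ℤ)
    (σ : X → Y) (hσ : StrongFormalSubdivision ρX ρY σ)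
    (τ : Y → Z) (hτmono : Monotone τ) (hτrank : RankIncreasing ρY ρZ τ) :
    StrongFormalSubdivision ρY ρZ τ ↔ StrongFormalSubdivision ρX ρZ (τ ∘ σ) := by
  obtain ⟨hσmono, hσrank, hσsurj, hσsum⟩ := hσ
  have hsum : UnitFiberSums ρY ρZ τ ↔ UnitFiberSums ρX ρZ (τ ∘ σ) :=
    unitFiberSums_comp_iff hσsum hσmono hσsurj.1
  constructor
  · rintro ⟨-, -, hτsurj, hτsum⟩
    exact ⟨hτmono.comp hσmono, hτrank.comp hσrank, hτsurj.comp hσsurj, hsum.1 hτsum⟩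
  · rintro ⟨-, -, hsurj, hsum'⟩
    exact ⟨hτmono, hτrank, hsurj.of_comp hσmono hσsurj.1 hσrank hτrank, hsum.2 hsum'⟩

/-- If `σ : X → Y` is a strong formal subdivision between finite lower
Eulerian posets and `τ : Y → Z` is order-preserving and rank-increasing, then `τ` is a
strong formal subdivision if and only if `τ ∘ σ` is. -/
theorem strongFormalSubdivision_comp_iff {X Y Z : Type*}
    [PartialOrder X] [PartialOrder Y] [PartialOrder Z] [Finite X] [Finite Y] [Finite Z]
    (ρX : X → ℤ) (ρY : Y → ℤ) (ρZ : Z → ℤ)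
    (hX : LowerEulerian ρX) (hY : LowerEulerian ρY) (hZ : LowerEulerian ρZ)
    (σ : X → Y) (hσ : StrongFormalSubdivision ρX ρY σ)
    (τ : Y → Z) (hτmono : Monotone τ) (hτrank : RankIncreasing ρY ρZ τ) :
    StrongFormalSubdivision ρY ρZ τ ↔ StrongFormalSubdivision ρX ρZ (τ ∘ σ) :=
  strongFormalSubdivision_comp_iff_general ρX ρY ρZ σ hσ τ hτmono hτrank

end SFSPaper
end

section
/- Let σ : X → Y be a strong formal subdivision between finite lower Eulerian posets X and Y with rank functions ρ_X and ρ_Y. Then ∑_{x ∈ X} (−1)^{ρ_X(x)} = ∑_{y ∈ Y} (−1)^{ρ_Y(y)}. In particular, |X| ≡ |Y| (mod 2). -/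
/-! Proof idea: since `X` has a least element `0̂`, the subdivision condition at `(0̂, y)`
says that the whole fibre `σ⁻¹(y)` has signed size `∑_{σ x = y} (-1)^(ρ_Y y - ρ_X x) = 1`.
Multiplying by `(-1)^(ρ_Y y)` shows that the fibre over `y` contributes exactly `(-1)^(ρ_Y y)`
to `∑_x (-1)^(ρ_X x)`; summing over `y` gives the equality of Euler sums, and reducing the
signs `±1` modulo `2` gives the parity statement. -/

namespace SFSPaper

variable {α β : Type*}

lemma neg_one_zpow_mul_neg_one_zpow_sub {K : Type*} [DivisionRing K] (a c : ℤ) :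
    (-1 : K) ^ a * (-1 : K) ^ (a - c) = (-1 : K) ^ c := by
  have h : (-1 : K) ≠ 0 := neg_ne_zero.mpr one_ne_zero
  rw [← zpow_add₀ h, show a + (a - c) = c + 2 * (a - c) by ring, zpow_add₀ h, zpow_mul]
  norm_num

lemma sum_neg_one_zpow_eq_of_sum_fiber_eq_one {K : Type*} [DivisionRing K]
    [Fintype α] [Fintype β] [DecidableEq β] {ρX : α → ℤ} {ρY : β → ℤ} (σ : α → β)
    (hfiber : ∀ y, ∑ x with σ x = y, (-1 : K) ^ (ρY y - ρX x) = 1) :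
    ∑ x, (-1 : K) ^ ρX x = ∑ y, (-1 : K) ^ ρY y := by
  rw [← Finset.sum_fiberwise Finset.univ σ]
  refine Finset.sum_congr rfl fun y _ => ?_
  calc ∑ x with σ x = y, (-1 : K) ^ ρX x
      = ∑ x with σ x = y, (-1 : K) ^ ρY y * (-1 : K) ^ (ρY y - ρX x) := by
        simp only [neg_one_zpow_mul_neg_one_zpow_sub]
    _ = (-1 : K) ^ ρY y := by rw [← Finset.mul_sum, hfiber y, mul_one]

lemma StrongFormalSubdivision.sum_fiber_eq_one [PartialOrder α] [PartialOrder β]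
    [Fintype α] [DecidableEq β] {ρX : α → ℤ} {ρY : β → ℤ} {σ : α → β}
    (hσ : StrongFormalSubdivision ρX ρY σ) {b : α} (hb : ∀ x, b ≤ x) (y : β) :
    ∑ x with σ x = y, (-1 : ℚ) ^ (ρY y - ρX x) = 1 := by
  obtain ⟨hmono, -, ⟨hsurj, -⟩, hsum⟩ := hσ
  obtain ⟨x, rfl⟩ := hsurj y
  refine Eq.trans ?_ (hsum b (σ x) (hmono (hb x)))
  exact (finsum_cond_eq_sum_of_cond_iff _ fun {x'} _ => by simp [hb x']).symm

lemma sum_intCast_negOnePow_eq_card [Fintype α] (ρ : α → ℤ) :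
    ∑ x, (((ρ x).negOnePow : ℤ) : ZMod 2) = Fintype.card α := by
  simp

lemma natCard_mod_two_eq_of_finsum_neg_one_zpow_eq [Finite α] [Finite β]
    {ρX : α → ℤ} {ρY : β → ℤ}
    (h : ∑ᶠ x, (-1 : ℚ) ^ ρX x = ∑ᶠ y, (-1 : ℚ) ^ ρY y) :
    Nat.card α % 2 = Nat.card β % 2 := by
  cases nonempty_fintype α
  cases nonempty_fintype β
  have hint : ∑ x, ((ρX x).negOnePow : ℤ) = ∑ y, ((ρY y).negOnePow : ℤ) := by
    refine Int.cast_injective (α := ℚ) ?_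
    simpa only [Int.cast_sum, Int.cast_negOnePow, finsum_eq_sum_of_fintype] using h
  have hmod := congrArg (Int.cast : ℤ → ZMod 2) hint
  rw [Int.cast_sum, Int.cast_sum, sum_intCast_negOnePow_eq_card,
    sum_intCast_negOnePow_eq_card] at hmod
  rw [Nat.card_eq_fintype_card, Nat.card_eq_fintype_card]
  exact (ZMod.natCast_eq_natCast_iff' _ _ _).mp hmod

theorem eulerSum_eq_of_strongFormalSubdivision_general {X Y : Type*}
    [PartialOrder X] [PartialOrder Y] [Finite X] [Finite Y]
    (ρX : X → ℤ) (ρY : Y → ℤ)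
    (hX : LowerEulerian ρX)
    (σ : X → Y) (hσ : StrongFormalSubdivision ρX ρY σ) :
    (∑ᶠ x : X, (-1 : ℚ) ^ ρX x) = (∑ᶠ y : Y, (-1 : ℚ) ^ ρY y) ∧
      Nat.card X % 2 = Nat.card Y % 2 := by
  classical
  cases nonempty_fintype X
  cases nonempty_fintype Y
  obtain ⟨b, hb⟩ := hX.2.1
  have heuler : ∑ᶠ x : X, (-1 : ℚ) ^ ρX x = ∑ᶠ y : Y, (-1 : ℚ) ^ ρY y := by
    simpa only [finsum_eq_sum_of_fintype] using
      sum_neg_one_zpow_eq_of_sum_fiber_eq_one σ (hσ.sum_fiber_eq_one hb)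
  exact ⟨heuler, natCard_mod_two_eq_of_finsum_neg_one_zpow_eq heuler⟩

/-- For a strong formal subdivision `σ : X → Y` between finite lower
Eulerian posets, `∑_{x ∈ X} (-1)^(ρ_X x) = ∑_{y ∈ Y} (-1)^(ρ_Y y)`; in particular
`|X| ≡ |Y| (mod 2)`. -/
theorem eulerSum_eq_of_strongFormalSubdivision {X Y : Type*}
    [PartialOrder X] [PartialOrder Y] [Finite X] [Finite Y]
    (ρX : X → ℤ) (ρY : Y → ℤ)
    (hX : LowerEulerian ρX) (hY : LowerEulerian ρY)
    (σ : X → Y) (hσ : StrongFormalSubdivision ρX ρY σ) :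
    (∑ᶠ x : X, (-1 : ℚ) ^ ρX x) = (∑ᶠ y : Y, (-1 : ℚ) ^ ρY y) ∧
      Nat.card X % 2 = Nat.card Y % 2 :=
  eulerSum_eq_of_strongFormalSubdivision_general ρX ρY hX σ hσ

end SFSPaper
end

section
/- Let Γ be a finite lower Eulerian poset with rank function ρ_Γ and let q be a join-admissible element of Γ with q ≠ 0̂_Γ. Set X = Γ ∖ {z ∈ Γ : q ≤ z} and Y = {z ∈ Γ : q ≤ z}, and define σ̂ : X → Y by σ̂(x) = x ∨ q. Then for all x ∈ X and y ∈ Y with σ̂(x) ≤ y, there exists x' ∈ X with x ≤ x', ρ_Γ(y) − ρ_Γ(x') = 1, and σ̂(x') = y. In particular, σ̂ is strongly surjective with respect to the rank functions given by restricting ρ_Γ to X and restricting ρ_Γ − 1 to Y. -/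
namespace SFSPaper

variable {α β : Type*}

/-!
Take `x'` maximal among the elements of `[x, y]` not above `q`. Every element of `(x', y]` is
then above `q`, hence above `x' ∨ q`, so `(x', y] = [x' ∨ q, y]`. If `x' ∨ q < y`, the Euler sums
of `[x', y]` and `[x' ∨ q, y]` would both vanish although they differ by `(-1)^ρ(x')`; hence
`x' ∨ q = y`, and `(x', y] = {y}` says that `y` covers `x'`.
-/

theorem intervalEulerSum_eq_add_of_Ioc_eq_Icc [PartialOrder α] [Finite α] (ρ : α → ℤ)
    {z u z' : α} (hzz' : z ≤ z') (h : Set.Ioc z z' = Set.Icc u z') :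
    intervalEulerSum ρ z z' = (-1 : ℚ) ^ ρ z + intervalEulerSum ρ u z' := by
  change ∑ᶠ w ∈ Set.Icc z z', (-1 : ℚ) ^ ρ w = (-1 : ℚ) ^ ρ z + ∑ᶠ w ∈ Set.Icc u z', _
  rw [← Set.Ioc_union_left hzz', Set.union_singleton, finsum_mem_insert _ Set.left_notMem_Ioc
    (Set.toFinite _), h]

theorem LowerEulerian.eq_of_Ioc_eq_Icc [PartialOrder α] [Finite α] {ρ : α → ℤ}
    (hρ : LowerEulerian ρ) {z u z' : α} (hu : u ≤ z') (h : Set.Ioc z z' = Set.Icc u z') :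
    u = z' := by
  have hzu : z < u := (h.symm ▸ Set.left_mem_Icc.mpr hu : u ∈ Set.Ioc z z').1
  by_contra hne
  have hsum := intervalEulerSum_eq_add_of_Ioc_eq_Icc ρ (hzu.le.trans hu) h
  rw [hρ.2.2 z z' (hzu.trans_le hu), hρ.2.2 u z' (hu.lt_of_ne hne), add_zero] at hsum
  exact zpow_ne_zero (ρ z) (by norm_num) hsum.symm

section JoinMap

variable {Γ : Type*} [PartialOrder Γ] {q : Γ} {jn : Γ → Γ}

theorem join_le_iff_of_isLeast (hjn : ∀ z : Γ, IsLeast {w : Γ | z ≤ w ∧ q ≤ w} (jn z))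
    {z w : Γ} : jn z ≤ w ↔ z ≤ w ∧ q ≤ w :=
  ⟨fun h => ⟨(hjn z).1.1.trans h, (hjn z).1.2.trans h⟩, fun h => (hjn z).2 h⟩

theorem Ioc_eq_Icc_join (hjn : ∀ z : Γ, IsLeast {w : Γ | z ≤ w ∧ q ≤ w} (jn z))
    {x y : Γ} (hx : ¬ q ≤ x) (hIoc : ∀ w ∈ Set.Ioc x y, q ≤ w) :
    Set.Ioc x y = Set.Icc (jn x) y := by
  ext w
  simp only [Set.mem_Ioc, Set.mem_Icc, join_le_iff_of_isLeast hjn]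
  constructor
  · rintro ⟨hxw, hwy⟩
    exact ⟨⟨hxw.le, hIoc w ⟨hxw, hwy⟩⟩, hwy⟩
  · rintro ⟨⟨hxw, hqw⟩, hwy⟩
    exact ⟨hxw.lt_of_ne (by rintro rfl; exact hx hqw), hwy⟩

theorem LowerEulerian.exists_covBy_join_eq [Finite Γ] {ρ : Γ → ℤ} (hΓ : LowerEulerian ρ)
    (hjn : ∀ z : Γ, IsLeast {w : Γ | z ≤ w ∧ q ≤ w} (jn z))
    {x y : Γ} (hx : ¬ q ≤ x) (hy : q ≤ y) (hxy : jn x ≤ y) :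
    ∃ x' : Γ, ¬ q ≤ x' ∧ x ≤ x' ∧ x' ⋖ y ∧ jn x' = y := by
  obtain ⟨x', hxx', hmax⟩ :=
    Finite.exists_le_maximal (p := fun w => w ≤ y ∧ ¬ q ≤ w) ⟨(hjn x).1.1.trans hxy, hx⟩
  have hIoc : ∀ w ∈ Set.Ioc x' y, q ≤ w := fun w hw => by
    by_contra hqw
    exact hw.1.not_ge (hmax.2 ⟨hw.2, hqw⟩ hw.1.le)
  have hjoin : jn x' = y :=
    hΓ.eq_of_Ioc_eq_Icc ((join_le_iff_of_isLeast hjn).mpr ⟨hmax.1.1, hy⟩)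
      (Ioc_eq_Icc_join hjn hmax.1.2 hIoc)
  refine ⟨x', hmax.1.2, hxx', ⟨hmax.1.1.lt_of_ne ?_, fun u hx'u huy => ?_⟩, hjoin⟩
  · rintro rfl
    exact hmax.1.2 hy
  · have hyu : y ≤ u :=
      hjoin ▸ (join_le_iff_of_isLeast hjn).mpr ⟨hx'u.le, hIoc u ⟨hx'u, huy.le⟩⟩
    exact huy.not_ge hyu

end JoinMap

/-- Let `Γ` be a finite lower Eulerian poset, `q ≠ 0̂_Γ` join-admissible
(with join function `jn`), `X = Γ ∖ Γ_{≥q}`, `Y = Γ_{≥q}`, `σ̂(x) = x ∨ q`. Then for all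
`x ∈ X`, `y ∈ Y` with `σ̂(x) ≤ y` there is `x' ∈ X` with `x ≤ x'`, `ρ_Γ(y) - ρ_Γ(x') = 1`
and `σ̂(x') = y`; in particular `σ̂` is strongly surjective for the restricted rank
functions `ρ_Γ` on `X` and `ρ_Γ - 1` on `Y`. -/
theorem joinMap_stronglySurjective {Γ : Type*} [PartialOrder Γ] [Finite Γ]
    (ρ : Γ → ℤ) (hΓ : LowerEulerian ρ)
    (b : Γ) (hb : ∀ z : Γ, b ≤ z) (q : Γ) (hq : q ≠ b)
    (jn : Γ → Γ) (hjn : ∀ z : Γ, IsLeast {w : Γ | z ≤ w ∧ q ≤ w} (jn z)) :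
    (∀ x : Γ, ¬ q ≤ x → ∀ y : Γ, q ≤ y → jn x ≤ y →
      ∃ x' : Γ, ¬ q ≤ x' ∧ x ≤ x' ∧ ρ y - ρ x' = 1 ∧ jn x' = y) ∧
    StronglySurjective (fun x : {z : Γ // ¬ q ≤ z} => ρ x.1)
      (fun y : {z : Γ // q ≤ z} => ρ y.1 - 1)
      (fun x : {z : Γ // ¬ q ≤ z} => (⟨jn x.1, (hjn x.1).1.2⟩ : {z : Γ // q ≤ z})) := by
  have key : ∀ x : Γ, ¬ q ≤ x → ∀ y : Γ, q ≤ y → jn x ≤ y →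
      ∃ x' : Γ, ¬ q ≤ x' ∧ x ≤ x' ∧ ρ y - ρ x' = 1 ∧ jn x' = y := by
    intro x hx y hy hxy
    obtain ⟨x', hqx', hxx', hcov, hjoin⟩ := hΓ.exists_covBy_join_eq hjn hx hy hxy
    exact ⟨x', hqx', hxx', by rw [hΓ.1 hcov]; ring, hjoin⟩
  have hqb : ¬ q ≤ b := fun h => hq (le_antisymm h (hb q))
  refine ⟨key, fun y => ?_, fun x y hxy => ?_⟩
  · obtain ⟨x', hqx', -, -, hjoin⟩ := key b hqb y.1 y.2 ((hjn b).2 ⟨hb y.1, y.2⟩)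
    exact ⟨⟨x', hqx'⟩, Subtype.ext hjoin⟩
  · obtain ⟨x', hqx', hxx', hrank, hjoin⟩ := key x.1 x.2 y.1 y.2 hxy
    exact ⟨⟨x', hqx'⟩, hxx', by dsimp only; omega, Subtype.ext hjoin⟩

end SFSPaper
end

section
/- Let Γ be a finite lower Eulerian poset with rank function ρ_Γ, and suppose Γ contains a join-admissible element q with q ≠ 0̂_Γ. Then Γ has as many elements of even ρ_Γ-rank as of odd ρ_Γ-rank, i.e. ∑_{z ∈ Γ} (−1)^{ρ_Γ(z)} = 0. In particular, |Γ| is even. -/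
/-!
Choose for every `z` its join `z ∨ q`, and let `f w` be the alternating sum over the fibre of
`w` under `z ↦ z ∨ q`. For `w ≥ q` one has `z ≤ w ↔ z ∨ q ≤ w`, so the sums of `f` over the
intervals `[q, w]` are the alternating sums over `[0̂, w]`, which vanish because `0̂ < q ≤ w`.
Möbius inversion on `{w | q ≤ w}` gives `f = 0` there, and the total alternating sum is the sum
of `f` over that set.
-/

namespace SFSPaper

variable {α β : Type*}

open Finset

section Preorder

variable [Preorder α] {q : α}

noncomputable def JoinAdmissible.join (hq : JoinAdmissible q) (z : α) : α :=
  (hq z).choose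

theorem JoinAdmissible.isLeast_join (hq : JoinAdmissible q) (z : α) :
    IsLeast {w | z ≤ w ∧ q ≤ w} (hq.join z) :=
  (hq z).choose_spec

theorem JoinAdmissible.join_le_iff (hq : JoinAdmissible q) {z w : α} (hw : q ≤ w) :
    hq.join z ≤ w ↔ z ≤ w :=
  ⟨(hq.isLeast_join z).1.1.trans, fun hz => (hq.isLeast_join z).2 ⟨hz, hw⟩⟩

theorem JoinAdmissible.join_mem_Icc_iff [LocallyFiniteOrder α] (hq : JoinAdmissible q)
    {z w : α} (hw : q ≤ w) : hq.join z ∈ Icc q w ↔ z ≤ w := by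
  rw [mem_Icc, hq.join_le_iff hw, and_iff_right (hq.isLeast_join z).1.2]

end Preorder

section PartialOrder

variable {M : Type*} [AddCommMonoid M] [PartialOrder α] {q : α}

theorem eq_zero_of_forall_sum_Icc_eq_zero [LocallyFiniteOrder α] [WellFoundedLT α] {f : α → M}
    (h : ∀ w, q ≤ w → ∑ w' ∈ Icc q w, f w' = 0) : ∀ w, q ≤ w → f w = 0 := by
  intro w
  induction w using WellFoundedLT.induction with
  | _ w ih =>
    intro hw
    have hIco : ∑ w' ∈ Ico q w, f w' = 0 :=
      sum_eq_zero fun w' hw' => ih w' (mem_Ico.1 hw').2 (mem_Ico.1 hw').1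
    simpa [Icc_eq_cons_Ico hw, hIco] using h w hw

theorem JoinAdmissible.sum_eq_zero_of_forall_sum_le_eq_zero [Fintype α] [LocallyFiniteOrder α]
    [DecidableLE α] (hq : JoinAdmissible q) {g : α → M}
    (h : ∀ w, q ≤ w → ∑ z with z ≤ w, g z = 0) : ∑ z, g z = 0 := by
  classical
  have hfibre : ∀ w, q ≤ w → ∑ z with hq.join z = w, g z = 0 := by
    refine eq_zero_of_forall_sum_Icc_eq_zero fun w hw => ?_
    refine (sum_fiberwise_eq_sum_filter _ _ _ _).trans ?_
    rw [← h w hw]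
    exact sum_congr (filter_congr fun z _ => hq.join_mem_Icc_iff hw) fun _ _ => rfl
  calc ∑ z, g z = ∑ w with q ≤ w, ∑ z with hq.join z = w, g z :=
        (sum_fiberwise_of_maps_to (fun z _ => mem_filter.2 ⟨mem_univ _, (hq.isLeast_join z).1.2⟩)
          g).symm
    _ = 0 := sum_eq_zero fun w hw => hfibre w (mem_filter.1 hw).2

end PartialOrder

theorem even_card_of_sum_neg_one_zpow_eq_zero {K : Type*} [Fintype α] [DivisionRing K]
    [CharZero K] {ρ : α → ℤ} (h : ∑ z, (-1 : K) ^ ρ z = 0) : Even (Fintype.card α) := by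
  have hℤ : ∑ z, ((ρ z).negOnePow : ℤ) = 0 :=
    Int.cast_injective (α := K) (by push_cast [Int.cast_negOnePow]; exact h)
  have hZMod := congrArg (Int.cast : ℤ → ZMod 2) hℤ
  push_cast at hZMod
  rw [← ZMod.natCast_eq_zero_iff_even, ← hZMod, ← card_univ, card_eq_sum_ones, Nat.cast_sum]
  refine sum_congr rfl fun z _ => ?_
  rcases Int.units_eq_one_or (ρ z).negOnePow with h | h <;> simp [h]

/-- A finite lower Eulerian poset containing a join-admissible element
`q ≠ 0̂_Γ` has as many elements of even rank as of odd rank; in particular its cardinality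
is even. -/
theorem eulerSum_eq_zero_of_joinAdmissible {Γ : Type*} [PartialOrder Γ] [Finite Γ]
    (ρ : Γ → ℤ) (hΓ : LowerEulerian ρ)
    (b : Γ) (hb : ∀ z : Γ, b ≤ z) (q : Γ) (hq : q ≠ b) (hqa : JoinAdmissible q) :
    (∑ᶠ z : Γ, (-1 : ℚ) ^ ρ z) = 0 ∧ Even (Nat.card Γ) := by
  classical
  cases nonempty_fintype Γ
  let := Fintype.toLocallyFiniteOrder (α := Γ)
  have hbq : b < q := (hb q).lt_of_ne hq.symm
  have hsum : ∑ z, (-1 : ℚ) ^ ρ z = 0 := by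
    refine hqa.sum_eq_zero_of_forall_sum_le_eq_zero fun w hw => ?_
    rw [← hΓ.2.2 b w (hbq.trans_le hw), intervalEulerSum]
    exact (finsum_cond_eq_sum_of_cond_iff _ fun {z} _ => by simp [hb z]).symm
  rw [finsum_eq_sum_of_fintype, Nat.card_eq_fintype_card]
  exact ⟨hsum, even_card_of_sum_neg_one_zpow_eq_zero hsum⟩

end SFSPaper
end

section
/- Let σ : X → Y be a strong formal subdivision between finite lower Eulerian posets X and Y with rank functions ρ_X and ρ_Y. Let X̄ (respectively Ȳ) denote the poset obtained from X (respectively Y) by adjoining a new maximal element. Then X̄ is Eulerian (i.e. admits a rank function making it Eulerian) if and only if Ȳ is Eulerian. -/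
namespace SFSPaper

variable {α β : Type*}

/-!
Adjoining a top element `⊤` to a finite lower Eulerian poset `(α, ρ)` gives an Eulerian poset
exactly when all maximal elements of `α` have one rank `r` (so that `ρ ⊤ = r + 1` extends `ρ`)
and every upper alternating sum `∑_{w ≥ z} (-1)^ρ(w)` equals `(-1)^r` (so that each interval
`[z, ⊤]` sums to zero); since rank functions are unique up to an additive constant, no other
extension needs to be considered. Both conditions are carried across a strong formal
subdivision `σ : X → Y`: grouping `∑_{x' ≥ x} (-1)^ρX(x')` along the fibres of `σ` and
applying the fibre identity to each fibre gives `∑_{y ≥ σ x} (-1)^ρY(y)`, and strong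
surjectivity makes `σ` map the maximal elements of `X` onto those of `Y`, preserving ranks.
-/

open Set

noncomputable def upSum [Preorder α] (ρ : α → ℤ) (z : α) : ℚ :=
  ∑ᶠ w ∈ Ici z, (-1 : ℚ) ^ ρ w

lemma negOne_zpow_sub (m k : ℤ) : (-1 : ℚ) ^ (m - k) = (-1) ^ m * (-1) ^ k := by
  rw [zpow_sub₀ (by norm_num), div_eq_mul_inv, ← zpow_neg]
  simp only [neg_one_zpow_eq_ite (n := -k), neg_one_zpow_eq_ite (n := k), even_neg]

lemma upSum_add_const [Preorder α] (ρ : α → ℤ) (c : ℤ) (z : α) :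
    upSum (fun w => ρ w + c) z = (-1) ^ c * upSum ρ z := by
  simp only [upSum, mul_finsum_mem, zpow_add₀ (show (-1 : ℚ) ≠ 0 by norm_num), mul_comm]

lemma IsRankFunction.eq_add_sub_of_isBot [PartialOrder α] [Finite α] {ρ ρ' : α → ℤ}
    (hρ : IsRankFunction ρ) (hρ' : IsRankFunction ρ') {b : α} (hb : IsBot b) (z : α) :
    ρ' z = ρ z + (ρ' b - ρ b) := by
  induction z using WellFoundedLT.induction with
  | ind z ih =>
    obtain rfl | hbz := (hb z).eq_or_lt
    · ring
    · obtain ⟨w, -, hwz⟩ := exists_le_covBy_of_lt hbz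
      rw [hρ hwz, hρ' hwz, ih w hwz.lt]
      ring

lemma isRankFunction_withTop_iff [Preorder α] {ρ : WithTop α → ℤ} :
    IsRankFunction ρ ↔
      IsRankFunction (fun x : α => ρ x) ∧ ∀ x : α, IsMax x → ρ ⊤ = ρ x + 1 := by
  refine ⟨fun h => ⟨fun x x' hx => h (WithTop.coe_covBy_coe.2 hx),
    fun x hx => h (WithTop.coe_covBy_top.2 hx)⟩, fun ⟨hcoe, htop⟩ => ?_⟩
  rintro (_ | x) (_ | x') hcov
  · exact (hcov.lt.ne rfl).elim
  · exact (not_top_covBy hcov).elim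
  · exact htop x (WithTop.coe_covBy_top.1 hcov)
  · exact hcoe (WithTop.coe_covBy_coe.1 hcov)

lemma intervalEulerSum_coe_coe [Preorder α] (ρ : WithTop α → ℤ) (a b : α) :
    intervalEulerSum ρ a b = intervalEulerSum (fun x : α => ρ x) a b := by
  change ∑ᶠ w ∈ Icc (a : WithTop α) b, _ = ∑ᶠ x ∈ Icc a b, _
  rw [← WithTop.image_coe_Icc, finsum_mem_image WithTop.coe_injective.injOn]

lemma intervalEulerSum_coe_top [PartialOrder α] [Finite α] (ρ : WithTop α → ℤ) (a : α) :
    intervalEulerSum ρ a ⊤ = (-1) ^ ρ ⊤ + upSum (fun x : α => ρ x) a := by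
  change ∑ᶠ w ∈ Icc (a : WithTop α) ⊤, _ = _
  rw [← Ico_insert_right le_top, finsum_mem_insert _ right_notMem_Ico (toFinite _),
    ← WithTop.image_coe_Ici, finsum_mem_image WithTop.coe_injective.injOn, upSum]

lemma exists_eulerian_withTop_iff [PartialOrder α] [Finite α] {ρ : α → ℤ}
    (hρ : LowerEulerian ρ) :
    (∃ ρ' : WithTop α → ℤ, Eulerian ρ') ↔
      ∃ r : ℤ, (∀ z, IsMax z → ρ z = r) ∧ ∀ z, upSum ρ z = (-1) ^ r := by
  obtain ⟨hrank, ⟨b, hb⟩, hsum⟩ := hρ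
  constructor
  · rintro ⟨ρ', ⟨hrank', -, hsum'⟩, -⟩
    obtain ⟨hcoe, htop⟩ := isRankFunction_withTop_iff.1 hrank'
    set c := ρ' b - ρ b
    have hshift : ∀ z : α, ρ' z = ρ z + c := hrank.eq_add_sub_of_isBot hcoe hb
    refine ⟨ρ' ⊤ - 1 - c, fun z hz => by rw [htop z hz, hshift]; ring, fun z => ?_⟩
    have hz := hsum' z ⊤ (WithTop.coe_lt_top z)
    rw [intervalEulerSum_coe_top, funext hshift, upSum_add_const] at hz
    have hc : (-1 : ℚ) ^ c * (-1) ^ c = 1 := by rw [← negOne_zpow_sub, sub_self, zpow_zero]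
    rw [negOne_zpow_sub, negOne_zpow_sub, zpow_one]
    linear_combination (-1 : ℚ) ^ c * hz - upSum ρ z * hc
  · rintro ⟨r, hmax, hup⟩
    refine ⟨WithTop.recTopCoe (r + 1) ρ, ⟨?_, ⟨b, ?_⟩, ?_⟩, ⊤, fun _ => le_top⟩
    · exact isRankFunction_withTop_iff.2 ⟨hrank, fun x hx => by simp [hmax x hx]⟩
    · exact WithTop.forall.2 ⟨le_top, fun x => WithTop.coe_le_coe.2 (hb x)⟩
    · intro z z' hlt
      induction z' using WithTop.recTopCoe with
      | top =>
        obtain ⟨a, rfl⟩ := WithTop.ne_top_iff_exists.1 hlt.ne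
        rw [intervalEulerSum_coe_top]
        simp [hup, zpow_add₀]
      | coe a' =>
        obtain ⟨a, rfl⟩ := WithTop.ne_top_iff_exists.1 (hlt.trans (WithTop.coe_lt_top a')).ne
        rw [intervalEulerSum_coe_coe]
        exact hsum a a' (WithTop.coe_lt_coe.1 hlt)

namespace StrongFormalSubdivision

variable [PartialOrder α] [PartialOrder β] {ρX : α → ℤ} {ρY : β → ℤ} {σ : α → β}

lemma finsum_fiber (hσ : StrongFormalSubdivision ρX ρY σ) {x : α} {y : β} (hxy : σ x ≤ y) :
    ∑ᶠ x' ∈ Ici x ∩ σ ⁻¹' {y}, (-1 : ℚ) ^ ρX x' = (-1) ^ ρY y := by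
  have h : ∑ᶠ x' ∈ Ici x ∩ σ ⁻¹' {y}, (-1 : ℚ) ^ (ρY y - ρX x') = 1 := hσ.2.2.2 x y hxy
  calc ∑ᶠ x' ∈ Ici x ∩ σ ⁻¹' {y}, (-1 : ℚ) ^ ρX x'
      = ∑ᶠ x' ∈ Ici x ∩ σ ⁻¹' {y}, (-1) ^ ρY y * (-1 : ℚ) ^ (ρY y - ρX x') :=
        finsum_mem_congr rfl fun x' _ => by
          rw [negOne_zpow_sub, ← mul_assoc, ← negOne_zpow_sub, sub_self, zpow_zero, one_mul]
    _ = (-1) ^ ρY y := by rw [← mul_finsum_mem, h, mul_one]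

lemma upSum_apply [Finite α] (hσ : StrongFormalSubdivision ρX ρY σ) (x : α) :
    upSum ρY (σ x) = upSum ρX x := by
  have hfin : (Ici (σ x)).Finite := (toFinite (σ '' Ici x)).subset fun y hy => by
    obtain ⟨x', hxx', -, hx'y⟩ := hσ.2.2.1.2 x y hy
    exact ⟨x', hxx', hx'y⟩
  have hunion : ⋃ y ∈ Ici (σ x), Ici x ∩ σ ⁻¹' {y} = Ici x := by
    ext x'
    simpa using fun hxx' : x ≤ x' => hσ.1 hxx'
  have hdisj : (Ici (σ x)).PairwiseDisjoint fun y => Ici x ∩ σ ⁻¹' {y} :=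
    fun y _ y' _ hne => (disjoint_singleton.2 hne).preimage σ |>.mono inter_subset_right
      inter_subset_right
  rw [upSum, upSum, ← hunion, finsum_mem_biUnion hdisj hfin fun _ _ => toFinite _]
  exact finsum_mem_congr rfl fun y hy => (hσ.finsum_fiber hy).symm

lemma rank_apply_of_isMax (hσ : StrongFormalSubdivision ρX ρY σ) {x : α} (hx : IsMax x) :
    ρY (σ x) = ρX x := by
  obtain ⟨x', hxx', hrank, -⟩ := hσ.2.2.1.2 x (σ x) le_rfl
  rw [← hrank, hx.eq_of_le hxx']

lemma isMax_apply (hσ : StrongFormalSubdivision ρX ρY σ) {x : α} (hx : IsMax x) :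
    IsMax (σ x) := fun y hy => by
  obtain ⟨x', hxx', -, rfl⟩ := hσ.2.2.1.2 x y hy
  rw [hx.eq_of_le hxx']

lemma exists_isMax_apply_eq [Finite α] (hσ : StrongFormalSubdivision ρX ρY σ) {y : β}
    (hy : IsMax y) : ∃ x, IsMax x ∧ σ x = y := by
  obtain ⟨x₀, rfl⟩ := hσ.2.2.1.1 y
  obtain ⟨x, hx₀x, hmax⟩ := Finite.exists_le_maximal (p := fun _ => True) trivial (a := x₀)
  exact ⟨x, fun x' hxx' => hmax.2 trivial hxx', (hy (hσ.1 hx₀x)).antisymm (hσ.1 hx₀x)⟩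

lemma forall_isMax_rank_eq_iff [Finite α] (hσ : StrongFormalSubdivision ρX ρY σ) (r : ℤ) :
    (∀ x, IsMax x → ρX x = r) ↔ ∀ y, IsMax y → ρY y = r := by
  refine ⟨fun h y hy => ?_, fun h x hx => ?_⟩
  · obtain ⟨x, hx, rfl⟩ := hσ.exists_isMax_apply_eq hy
    rw [hσ.rank_apply_of_isMax hx, h x hx]
  · rw [← hσ.rank_apply_of_isMax hx, h _ (hσ.isMax_apply hx)]

lemma forall_upSum_eq_iff [Finite α] (hσ : StrongFormalSubdivision ρX ρY σ) (c : ℚ) :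
    (∀ x, upSum ρX x = c) ↔ ∀ y, upSum ρY y = c := by
  refine ⟨fun h y => ?_, fun h x => by rw [← hσ.upSum_apply, h]⟩
  obtain ⟨x, rfl⟩ := hσ.2.2.1.1 y
  rw [hσ.upSum_apply, h]

end StrongFormalSubdivision

/-- For a strong formal subdivision `σ : X → Y` between finite lower
Eulerian posets, the poset `X̄ = WithTop X` obtained by adjoining a maximal element is
Eulerian (i.e. admits a rank function making it Eulerian) if and only if `Ȳ = WithTop Y`
is Eulerian. -/
theorem withTop_eulerian_iff {X Y : Type*} [PartialOrder X] [PartialOrder Y]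
    [Finite X] [Finite Y]
    (ρX : X → ℤ) (ρY : Y → ℤ)
    (hX : LowerEulerian ρX) (hY : LowerEulerian ρY)
    (σ : X → Y) (hσ : StrongFormalSubdivision ρX ρY σ) :
    (∃ ρ : WithTop X → ℤ, Eulerian ρ) ↔ (∃ ρ : WithTop Y → ℤ, Eulerian ρ) := by
  rw [exists_eulerian_withTop_iff hX, exists_eulerian_withTop_iff hY]
  exact exists_congr fun r =>
    and_congr (hσ.forall_isMax_rank_eq_iff r) (hσ.forall_upSum_eq_iff _)

end SFSPaper
end
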